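/- Among all valid formats (m_1,…,m_r) for n = 2^s + k players (0 ≤ k < 2^s), with p > 1/2, the product ∏_{j=1}^r ((2m_j/r_j)p + 1 − 2m_j/r_j) is maximized by the balanced format, with maximal value ((2k/n)p + 1 − 2k/n)·p^s. -/

import Mathlib

/-- `ValidFormat n r m` : `m 0, …, m (r-1)` are the numbers of matches per round of a
knockout tournament format for `n` players. -/
def ValidFormat (n r : ℕ) (m : ℕ → ℕ) : Prop :=
  (∀ j < r, 0 < m j ∧ 2 * m j ≤ n - ∑ l ∈ Finset.range j, m l) ∧
  ∑ j ∈ Finset.range r, m j = n - 1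

/-- The product `∏_j (2 m_j / r_j · p + 1 − 2 m_j / r_j)` associated with a format. -/
noncomputable def formatProd (n r : ℕ) (m : ℕ → ℕ) (p : ℝ) : ℝ :=
  ∏ j ∈ Finset.range r,
    ((2 * m j / ((n : ℝ) - ∑ l ∈ Finset.range j, (m l : ℝ))) * p
      + 1 - 2 * m j / ((n : ℝ) - ∑ l ∈ Finset.range j, (m l : ℝ)))

/-!
The product of a format factors round by round: a format for `n` players is a first round of `m₀`
matches followed by a format for the `n - m₀` survivors. The optimum extends to every `n` as
`Q(n) = (2^σ + (2p-1)(n - 2^σ)) / n · p^σ` with `σ = ⌊log₂ n⌋` (`balancedValue`), so that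
`n Q(n)` is the piecewise linear interpolation of `(2p)^σ` at the powers of two. The upper bound
then follows by induction from the one-round inequality `(round factor) · Q(n - m₀) ≤ Q(n)`,
which is a polynomial inequality, split according to whether `n - m₀` has the same binary length
as `n` or one digit less. The balanced format attains `Q(n)`.
-/

open Finset

noncomputable def roundFactor (p x y : ℝ) : ℝ := 2 * y / x * p + 1 - 2 * y / x

noncomputable def balancedValue (p : ℝ) (n : ℕ) : ℝ :=
  (2 ^ Nat.log 2 n + (2 * p - 1) * (n - 2 ^ Nat.log 2 n)) / n * p ^ Nat.log 2 n

def shiftFormat (m : ℕ → ℕ) : ℕ → ℕ := fun j => m (j + 1)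

def halvingFormat (s : ℕ) : ℕ → ℕ := fun j => 2 ^ (s - (j + 1))

def balancedFormat (s k : ℕ) : ℕ → ℕ := fun j => if j = 0 then k else 2 ^ (s - j)

section RoundByRound

variable {n r : ℕ} {m : ℕ → ℕ}

theorem validFormat_zero_iff : ValidFormat n 0 m ↔ n ≤ 1 := by
  simp only [ValidFormat, Nat.not_lt_zero, IsEmpty.forall_iff, implies_true, range_zero,
    sum_empty, true_and]
  omega

theorem validFormat_succ_iff :
    ValidFormat n (r + 1) m ↔
      0 < m 0 ∧ 2 * m 0 ≤ n ∧ ValidFormat (n - m 0) r (shiftFormat m) := by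
  simp only [ValidFormat, shiftFormat, sum_range_succ' m, Nat.forall_lt_succ_left',
    range_zero, sum_empty, Nat.sub_zero, add_comm _ (m 0), Nat.sub_add_eq, and_assoc]
  constructor <;> rintro ⟨h0, h2, hj, hsum⟩ <;> exact ⟨h0, h2, hj, by omega⟩

theorem formatProd_succ (p : ℝ) (h : m 0 ≤ n) :
    formatProd n (r + 1) m p =
      roundFactor p n (m 0) * formatProd (n - m 0) r (shiftFormat m) p := by
  simp only [formatProd, prod_range_succ', sum_range_succ', Nat.cast_sub h, shiftFormat]
  simp only [range_zero, sum_empty, sub_zero, roundFactor, mul_comm, sub_add_eq_sub_sub_swap]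

end RoundByRound

section BalancedValue

variable {p : ℝ}

theorem balancedValue_one : balancedValue p 1 = 1 := by simp [balancedValue]

theorem balancedValue_of_pow_le_of_lt_pow {n σ : ℕ} (h₁ : 2 ^ σ ≤ n) (h₂ : n < 2 ^ (σ + 1)) :
    balancedValue p n = (2 ^ σ + (2 * p - 1) * (n - 2 ^ σ)) / n * p ^ σ := by
  rw [balancedValue, Nat.log_eq_of_pow_le_of_lt_pow h₁ h₂]

theorem roundFactor_eq {x : ℝ} (hx : x ≠ 0) (y : ℝ) :
    roundFactor p x y = (x - y + (2 * p - 1) * y) / x := by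
  rw [roundFactor]; field_simp; ring

theorem roundFactor_two_mul {y : ℝ} (hy : y ≠ 0) : roundFactor p (2 * y) y = p := by
  rw [roundFactor, div_self (mul_ne_zero two_ne_zero hy)]
  ring

theorem roundFactor_nonneg (hp : 0 ≤ p) {x y : ℝ} (hy : 0 ≤ y) (h : 2 * y ≤ x) :
    0 ≤ roundFactor p x y := by
  have hq₀ : 0 ≤ 2 * y / x := div_nonneg (by linarith) (by linarith)
  have hq₁ : 2 * y / x ≤ 1 := div_le_one_of_le₀ h (by linarith)
  rw [roundFactor]
  nlinarith

theorem div_mul_div_mul_le_of_mul_le {a b c u v q : ℝ} (hu : 0 < u) (hv : 0 < v) (hq : 0 ≤ q)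
    (h : a * b ≤ v * c) : a / u * (b / v * q) ≤ c / u * q := by
  rw [← mul_assoc, div_mul_div_comm, mul_comm u v, ← div_div]
  gcongr
  rwa [div_le_iff₀' hv]

theorem roundFactor_mul_balancedValue_le (hp₀ : 1 / 2 ≤ p) (hp₁ : p ≤ 1) {n m : ℕ}
    (hm : 2 * m ≤ n) : roundFactor p n m * balancedValue p (n - m) ≤ balancedValue p n := by
  rcases Nat.eq_zero_or_pos n with rfl | hn
  · simp [balancedValue]
  set t := n - m
  have ht : 0 < t := by omega
  have htn : (t : ℝ) + m = n := by exact_mod_cast (by omega : t + m = n)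
  set σ := Nat.log 2 t
  have hσ₁ : 2 ^ σ ≤ t := Nat.pow_log_le_self 2 ht.ne'
  have hσ₂ : t < 2 ^ (σ + 1) := Nat.lt_pow_succ_log_self one_lt_two t
  rw [roundFactor_eq (by positivity), balancedValue_of_pow_le_of_lt_pow hσ₁ hσ₂]
  have ha₀ : 0 ≤ 2 * p - 1 := by linarith
  have ha₁ : 2 * p - 1 ≤ 1 := by linarith
  have hc : (2 : ℝ) ^ σ ≤ t := by exact_mod_cast hσ₁
  have hm' : (0 : ℝ) ≤ m := m.cast_nonneg
  by_cases hlev : n < 2 ^ (σ + 1)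
  · rw [balancedValue_of_pow_le_of_lt_pow (hσ₁.trans (by omega)) hlev, ← htn,
      add_sub_cancel_right]
    -- with `a = 2p - 1`, the difference of the two sides is `a (1 - a) m (t - 2^σ)`
    have key : (t + (2 * p - 1) * m) * (2 ^ σ + (2 * p - 1) * (t - 2 ^ σ))
        ≤ t * (2 ^ σ + (2 * p - 1) * (t + m - 2 ^ σ)) := by
      nlinarith [mul_nonneg (mul_nonneg (mul_nonneg ha₀ (sub_nonneg.2 ha₁)) hm')
        (sub_nonneg.2 hc)]
    exact div_mul_div_mul_le_of_mul_le (by positivity) (by positivity) (by positivity) key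
  · have hlev' : n < 2 ^ (σ + 1 + 1) := by rw [pow_succ]; omega
    rw [balancedValue_of_pow_le_of_lt_pow (not_lt.1 hlev) hlev', ← htn, add_sub_cancel_right]
    have hc₂ : (t : ℝ) ≤ 2 * 2 ^ σ := by rw [← pow_succ']; exact_mod_cast hσ₂.le
    have hmt : (m : ℝ) ≤ t := by exact_mod_cast (by omega : m ≤ t)
    -- with `a = 2p - 1`, the difference of the two sides is `a (1 - a) (2^(σ+1) - t) (t - m) / 2`
    have key : (t + (2 * p - 1) * m) * (2 ^ σ + (2 * p - 1) * (t - 2 ^ σ))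
        ≤ t * (p * (2 * 2 ^ σ + (2 * p - 1) * (t + m - 2 * 2 ^ σ))) := by
      nlinarith [mul_nonneg (mul_nonneg (mul_nonneg ha₀ (sub_nonneg.2 ha₁)) (sub_nonneg.2 hmt))
        (sub_nonneg.2 hc₂)]
    calc _ ≤ p * (2 * 2 ^ σ + (2 * p - 1) * (t + m - 2 * 2 ^ σ)) / (t + m) * p ^ σ :=
          div_mul_div_mul_le_of_mul_le (by positivity) (by positivity) (by positivity) key
      _ = _ := by ring

end BalancedValue

theorem formatProd_le_balancedValue {p : ℝ} (hp₀ : 1 / 2 ≤ p) (hp₁ : p ≤ 1) {n r : ℕ}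
    {m : ℕ → ℕ} (hn : 1 ≤ n) (h : ValidFormat n r m) :
    formatProd n r m p ≤ balancedValue p n := by
  induction r generalizing n m with
  | zero =>
    obtain rfl : n = 1 := le_antisymm (validFormat_zero_iff.1 h) hn
    simp [formatProd, balancedValue_one]
  | succ r ih =>
    obtain ⟨hm₀, h2m, htail⟩ := validFormat_succ_iff.1 h
    rw [formatProd_succ p (by omega)]
    calc roundFactor p n (m 0) * formatProd (n - m 0) r (shiftFormat m) p
        ≤ roundFactor p n (m 0) * balancedValue p (n - m 0) :=
          mul_le_mul_of_nonneg_left (ih (by omega) htail)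
            (roundFactor_nonneg (by linarith) (Nat.cast_nonneg _) (by exact_mod_cast h2m))
      _ ≤ balancedValue p n := roundFactor_mul_balancedValue_le hp₀ hp₁ h2m

section Formats

variable (s k : ℕ)

theorem halvingFormat_succ_zero : halvingFormat (s + 1) 0 = 2 ^ s := rfl

theorem shiftFormat_halvingFormat_succ :
    shiftFormat (halvingFormat (s + 1)) = halvingFormat s := by
  funext j
  simp only [shiftFormat, halvingFormat, Nat.add_sub_add_right]

theorem two_pow_succ_sub_two_pow : 2 ^ (s + 1) - 2 ^ s = 2 ^ s := by
  rw [pow_succ]; omega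

theorem validFormat_halvingFormat : ValidFormat (2 ^ s) s (halvingFormat s) := by
  induction s with
  | zero => exact validFormat_zero_iff.2 le_rfl
  | succ s ih =>
    refine validFormat_succ_iff.2
      ⟨Nat.two_pow_pos s, by rw [halvingFormat_succ_zero, pow_succ'], ?_⟩
    rwa [halvingFormat_succ_zero, two_pow_succ_sub_two_pow, shiftFormat_halvingFormat_succ]

theorem formatProd_halvingFormat (p : ℝ) : formatProd (2 ^ s) s (halvingFormat s) p = p ^ s := by
  induction s with
  | zero => simp [formatProd]
  | succ s ih =>
    rw [formatProd_succ p (by rw [halvingFormat_succ_zero, pow_succ]; omega),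
      halvingFormat_succ_zero, two_pow_succ_sub_two_pow, shiftFormat_halvingFormat_succ, ih,
      pow_succ' p, Nat.cast_pow, Nat.cast_pow, Nat.cast_ofNat, pow_succ',
      roundFactor_two_mul (by positivity)]

@[simp] theorem balancedFormat_zero : balancedFormat s k 0 = k := rfl

theorem shiftFormat_balancedFormat : shiftFormat (balancedFormat s k) = halvingFormat s := rfl

theorem validFormat_balancedFormat (hk₀ : 0 < k) (hk : k < 2 ^ s) :
    ValidFormat (2 ^ s + k) (s + 1) (balancedFormat s k) := by
  refine validFormat_succ_iff.2 ⟨hk₀, by simp only [balancedFormat_zero]; omega, ?_⟩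
  rw [balancedFormat_zero, Nat.add_sub_cancel, shiftFormat_balancedFormat]
  exact validFormat_halvingFormat s

theorem formatProd_balancedFormat (p : ℝ) :
    formatProd (2 ^ s + k) (s + 1) (balancedFormat s k) p
      = roundFactor p (2 ^ s + k : ℕ) k * p ^ s := by
  rw [formatProd_succ p (by simp), balancedFormat_zero, Nat.add_sub_cancel,
    shiftFormat_balancedFormat, formatProd_halvingFormat]

end Formats

theorem stmt_11 (s k n : ℕ) (hk : k < 2 ^ s) (hn : n = 2 ^ s + k)
    (p : ℝ) (hp : p ∈ Set.Ioo (1/2 : ℝ) 1) :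
    (∀ r : ℕ, ∀ m : ℕ → ℕ, ValidFormat n r m →
        formatProd n r m p ≤ ((2*k/(n:ℝ)) * p + 1 - 2*k/(n:ℝ)) * p ^ s) ∧
    (∃ r : ℕ, ∃ m : ℕ → ℕ, ValidFormat n r m ∧
        formatProd n r m p = ((2*k/(n:ℝ)) * p + 1 - 2*k/(n:ℝ)) * p ^ s) := by
  subst hn
  have hvalue : balancedValue p (2 ^ s + k) = roundFactor p (2 ^ s + k : ℕ) k * p ^ s := by
    rw [balancedValue_of_pow_le_of_lt_pow (σ := s) (by omega) (by rw [pow_succ]; omega),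
      roundFactor_eq (by positivity)]
    push_cast
    ring
  refine ⟨fun r m h => ?_, ?_⟩
  · have hn : 1 ≤ 2 ^ s + k := le_add_right s.one_le_two_pow
    exact (formatProd_le_balancedValue hp.1.le hp.2.le hn h).trans_eq hvalue
  · rcases Nat.eq_zero_or_pos k with rfl | hk₀
    · exact ⟨s, halvingFormat s, validFormat_halvingFormat s, by simp [formatProd_halvingFormat]⟩
    · exact ⟨s + 1, balancedFormat s k, validFormat_balancedFormat s k hk₀ hk,
        formatProd_balancedFormat s k p⟩
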